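/- Let G act spherically transitively on T, let v_n ∈ L_n, and let u ∈ D(v_n). Then the permutation representation of G on F[L_{n+1}] is isomorphic to the direct sum of the representation on F[L_n] and the representation induced from the St_G(v_n)-representation F[D(v_n)]⁰ (the complement of the trivial representation in F[D(v_n)]), provided char(F) does not divide the Steinitz order of the closure of G. -/

import Mathlib

/-- Vertices of level `n` of the spherically symmetric rooted tree on `(X i)`. -/
abbrev Vert (X : ℕ → Type) (n : ℕ) := ∀ i : Fin n, X i.val

/-- The predecessor (parent) of a vertex of level `n+1`. -/
def pred {X : ℕ → Type} {n : ℕ} (v : Vert X (n + 1)) : Vert X n :=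
  fun i => v i.castSucc

/-- A (root-preserving) action of `G` on the tree: compatible actions on all levels. -/
structure TreeAction (X : ℕ → Type) (G : Type) [Group G] where
  ρ : ∀ n : ℕ, G →* Equiv.Perm (Vert X n)
  compat : ∀ (n : ℕ) (g : G) (v : Vert X (n + 1)), pred (ρ (n + 1) g v) = ρ n g (pred v)

variable {X : ℕ → Type} {G : Type} [Group G]

/-- Spherically transitive action. -/
def SphTrans (A : TreeAction X G) : Prop := ∀ (n : ℕ) (u v : Vert X n), ∃ g : G, A.ρ n g u = v

/-- Locally 2-transitive action. -/
def LocTwoTrans (A : TreeAction X G) : Prop :=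
  SphTrans A ∧ ∀ (n : ℕ) (u v : Vert X n), u ≠ v →
    ∀ u₁ u₂ v₁ v₂ : Vert X (n + 1), pred u₁ = u → pred u₂ = u → pred v₁ = v → pred v₂ = v →
      ∃ g : G, A.ρ n g u = u ∧ A.ρ n g v = v ∧ A.ρ (n + 1) g u₁ = u₂ ∧ A.ρ (n + 1) g v₁ = v₂

variable [∀ i, DecidableEq (X i)]

/-- Length of the longest common prefix of two vertices of level `n`. -/
def cpl {n : ℕ} (u v : Vert X n) : ℕ :=
  Nat.findGreatest (fun k => ∀ i : Fin n, (i : ℕ) < k → u i = v i) n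

/-- The shortest-path distance between two vertices of level `n`. -/
def tdist {n : ℕ} (u v : Vert X n) : ℕ := 2 * (n - cpl u v)

/-- The space of equivariant linear maps between two representations. -/
def repHom {F : Type} [Field F] {G : Type} [Monoid G] {V W : Type}
    [AddCommGroup V] [Module F V] [AddCommGroup W] [Module F W]
    (ρV : Representation F G V) (ρW : Representation F G W) :
    Submodule F (V →ₗ[F] W) where
  carrier := {φ | ∀ g : G, φ ∘ₗ ρV g = ρW g ∘ₗ φ}
  add_mem' := by
    intro a b ha hb g
    rw [LinearMap.add_comp, LinearMap.comp_add, ha g, hb g]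
  zero_mem' := by
    intro g
    simp
  smul_mem' := by
    intro c φ hφ g
    rw [LinearMap.smul_comp, LinearMap.comp_smul, hφ g]

/-- A representation is irreducible if it is nonzero and has no proper nonzero
invariant subspace. -/
def Representation.IsIrred {F : Type} [Field F] {G : Type} [Monoid G] {V : Type}
    [AddCommGroup V] [Module F V] (ρ : Representation F G V) : Prop :=
  Nontrivial V ∧ ∀ W : Submodule F V, (∀ g : G, ∀ x ∈ W, ρ g x ∈ W) → W = ⊥ ∨ W = ⊤

/-- A representation is trivial if the group acts identically. -/
def Representation.IsTriv {F : Type} [Field F] {G : Type} [Monoid G] {V : Type}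
    [AddCommGroup V] [Module F V] (ρ : Representation F G V) : Prop :=
  ∀ (g : G) (x : V), ρ g x = x

/-- `π` occurs in `ρ`, i.e. `π` is isomorphic to a subrepresentation of `ρ`. -/
def Representation.OccursIn {F : Type} [Field F] {G : Type} [Monoid G] {V W : Type}
    [AddCommGroup V] [Module F V] [AddCommGroup W] [Module F W]
    (π : Representation F G V) (ρ : Representation F G W) : Prop :=
  ∃ j : V →ₗ[F] W, Function.Injective j ∧ ∀ (g : G) (x : V), j (π g x) = ρ g (j x)

/-- The carrier of the representation induced from a representation `π` of a
subgroup `S ≤ G`: the functions `f : G → V` with `f (s * x) = π s (f x)`. -/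
def IndCarrier {F : Type} [Field F] {G : Type} [Group G] (S : Subgroup G) {V : Type}
    [AddCommGroup V] [Module F V] (π : Representation F S V) :
    Submodule F (G → V) where
  carrier := {f | ∀ (s : S) (x : G), f (↑s * x) = π s (f x)}
  add_mem' := by
    intro a b ha hb s x
    simp only [Pi.add_apply, ha s x, hb s x, map_add]
  zero_mem' := by
    intro s x
    simp
  smul_mem' := by
    intro c f hf s x
    simp only [Pi.smul_apply, hf s x, map_smul]

/-- The representation of `G` induced from a representation `π` of a subgroup
`S ≤ G`, by right translation on functions. -/
def IndRep {F : Type} [Field F] {G : Type} [Group G] (S : Subgroup G) {V : Type}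
    [AddCommGroup V] [Module F V] (π : Representation F S V) :
    Representation F G (IndCarrier S π) where
  toFun h :=
    { toFun := fun f => ⟨fun x => (f : G → V) (x * h), by
        intro s x
        have := f.2 s (x * h)
        simpa [mul_assoc] using this⟩
      map_add' := fun f g => rfl
      map_smul' := fun c f => rfl }
  map_one' := by
    apply LinearMap.ext
    intro f
    apply Subtype.ext
    funext x
    simp
  map_mul' := by
    intro a b
    apply LinearMap.ext
    intro f
    apply Subtype.ext
    funext x
    simp [mul_assoc]

/-- The stabiliser of the vertex `v` in `G`. -/
def stab {X : ℕ → Type} {G : Type} [Group G] (A : TreeAction X G) {n : ℕ}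
    (v : Vert X n) : Subgroup G where
  carrier := {g | A.ρ n g v = v}
  one_mem' := by simp
  mul_mem' := by
    intro a b ha hb
    simp only [Set.mem_setOf_eq, map_mul, Equiv.Perm.mul_apply] at *
    rw [hb, ha]
  inv_mem' := by
    intro a ha
    simp only [Set.mem_setOf_eq, map_inv] at *
    exact (Equiv.symm_apply_eq _).mpr ha.symm

/-- The set of descendants of the vertex `v`. -/
def Desc (X : ℕ → Type) {n : ℕ} (v : Vert X n) : Type :=
  {w : Vert X (n + 1) // pred w = v}

/-- The stabiliser of `v` permutes the descendants of `v`. -/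
def descPermHom {X : ℕ → Type} {G : Type} [Group G] (A : TreeAction X G) {n : ℕ}
    (v : Vert X n) : stab A v →* Equiv.Perm (Desc X v) where
  toFun g :=
    { toFun := fun w => ⟨A.ρ (n + 1) g.1 w.1, by rw [A.compat, w.2]; exact g.2⟩
      invFun := fun w => ⟨A.ρ (n + 1) g.1⁻¹ w.1, by
        rw [A.compat, w.2]
        exact (stab A v).inv_mem g.2⟩
      left_inv := fun w => Subtype.ext (by
        simp [← Equiv.Perm.mul_apply, ← map_mul])
      right_inv := fun w => Subtype.ext (by
        show A.ρ (n + 1) g.1 (A.ρ (n + 1) g.1⁻¹ w.1) = w.1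
        rw [← Equiv.Perm.mul_apply, ← map_mul, mul_inv_cancel, map_one, Equiv.Perm.one_apply]) }
  map_one' := by
    ext w
    apply Subtype.ext
    simp [Equiv.Perm.one_apply]
    rfl
  map_mul' := by
    intro a b
    ext w
    apply Subtype.ext
    simp [Equiv.Perm.mul_apply]
    rfl

/-- The permutation representation of the stabiliser of `v` on `F[D(v)]`. -/
noncomputable def descRep (F : Type) [Field F] {X : ℕ → Type} {G : Type} [Group G]
    (A : TreeAction X G) {n : ℕ} (v : Vert X n) :
    Representation F (stab A v) (Desc X v →₀ F) :=
  letI : MulAction (stab A v) (Desc X v) := MulAction.compHom _ (descPermHom A v)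
  { toFun := fun g => Finsupp.lmapDomain F F (g • ·)
    map_one' := by ext x y; simp
    map_mul' := fun x y => by ext z w; simp [mul_smul] }

/-- The permutation representation of `G` on `F[L_n]`. -/
noncomputable def levelRep (F : Type) [Field F] {X : ℕ → Type} {G : Type} [Group G]
    (A : TreeAction X G) (n : ℕ) : Representation F G (Vert X n →₀ F) :=
  letI : MulAction G (Vert X n) := MulAction.compHom _ (A.ρ n)
  { toFun := fun g => Finsupp.lmapDomain F F (g • ·)
    map_one' := by ext x y; simp
    map_mul' := fun x y => by ext z w; simp [mul_smul] }

/-- The subspace of `F[α]` of formal sums whose coefficients sum to zero. -/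
noncomputable def zeroSum (F : Type) [Field F] (α : Type) : Submodule F (α →₀ F) :=
  LinearMap.ker (Finsupp.linearCombination F (fun _ : α => (1 : F)))

/-!
Restricting `g • x` to the descendants `D(v)` of `v`, for all `g : G`, identifies `F[L_{n+1}]`
with the representation induced from the permutation representation `F[D(v)]` of `Stab(v)`:
transitivity on level `n` makes every vertex of level `n + 1` a translate of a descendant of `v`.
Pushing forward along `pred` maps `F[L_{n+1}]` onto `F[L_n]`, split equivariantly by
`y ↦ |X n|⁻¹ • (y ∘ pred)`; here `|X n|` is invertible in `F` since it divides `|L_{n+1}|`, which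
divides the order of the image of `G` on that level. The complementary kernel consists of the
vectors whose restriction to every `D(z)` has coefficient sum zero, and under the first
identification it is induced from `F[D(v)]⁰`.
-/

open Finset

variable {X : ℕ → Type} {G : Type} [Group G]

section Descendants

def descEquivLast {n : ℕ} (z : Vert X n) : Desc X z ≃ X n where
  toFun w := w.1 (Fin.last n)
  invFun a := ⟨Fin.snoc z a, funext fun i => Fin.snoc_castSucc _ _ _⟩
  left_inv := by
    rintro ⟨w, rfl⟩
    exact Subtype.ext (Fin.snoc_init_self w)
  right_inv a := Fin.snoc_last (α := fun i : Fin (n + 1) => X i.val) a z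

instance [∀ i, Fintype (X i)] {n : ℕ} (z : Vert X n) : Fintype (Desc X z) :=
  Fintype.ofEquiv _ (descEquivLast z).symm

lemma card_desc [∀ i, Fintype (X i)] {n : ℕ} (z : Vert X n) :
    Fintype.card (Desc X z) = Fintype.card (X n) :=
  Fintype.card_congr (descEquivLast z)

lemma card_dvd_card_vert_succ [∀ i, Fintype (X i)] (n : ℕ) :
    Fintype.card (X n) ∣ Nat.card (Vert X (n + 1)) := by
  rw [Nat.card_congr (Fin.snocEquiv fun i : Fin (n + 1) => X i.val).symm, Nat.card_prod,
    Nat.card_eq_fintype_card]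
  exact dvd_mul_right _ _

lemma card_vert_dvd_card_range (A : TreeAction X G) (hsph : SphTrans A) {m : ℕ}
    (u : Vert X m) : Nat.card (Vert X m) ∣ Nat.card (A.ρ m).range := by
  have : MulAction.IsPretransitive (A.ρ m).range (Vert X m) :=
    ⟨fun a b => let ⟨g, hg⟩ := hsph m a b; ⟨⟨A.ρ m g, g, rfl⟩, hg⟩⟩
  rw [← MulAction.index_stabilizer_of_transitive (A.ρ m).range u]
  exact Dvd.intro_left _ (Subgroup.card_mul_index _)

end Descendants

section Representations

variable (F : Type) [Field F] (A : TreeAction X G)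

lemma levelRep_apply (m : ℕ) (g : G) (x : Vert X m →₀ F) (w : Vert X m) :
    levelRep F A m g x w = x (A.ρ m g⁻¹ w) := by
  show Finsupp.mapDomain (A.ρ m g) x w = _
  rw [Finsupp.mapDomain_equiv_apply, map_inv, Equiv.Perm.inv_def]

lemma descRep_apply {n : ℕ} (v : Vert X n) (s : stab A v) (y : Desc X v →₀ F) (d : Desc X v) :
    descRep F A v s y d = y ((descPermHom A v s).symm d) :=
  Finsupp.mapDomain_equiv_apply y d

lemma mem_zeroSum_iff {α : Type} [Fintype α] (y : α →₀ F) :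
    y ∈ zeroSum F α ↔ ∑ a, y a = 0 := by
  rw [zeroSum, LinearMap.mem_ker, Finsupp.linearCombination_apply,
    Finsupp.sum_fintype _ _ (by simp)]
  simp

end Representations

section Levels

variable (F : Type) [Field F] (A : TreeAction X G) (n : ℕ)

noncomputable def predPush : (Vert X (n + 1) →₀ F) →ₗ[F] (Vert X n →₀ F) :=
  Finsupp.lmapDomain F F pred

variable {F n}

lemma predPush_levelRep (g : G) (x : Vert X (n + 1) →₀ F) :
    predPush F n (levelRep F A (n + 1) g x) = levelRep F A n g (predPush F n x) := by
  show Finsupp.mapDomain pred (Finsupp.mapDomain (A.ρ (n + 1) g) x)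
    = Finsupp.mapDomain (A.ρ n g) (Finsupp.mapDomain pred x)
  rw [← Finsupp.mapDomain_comp, ← Finsupp.mapDomain_comp]
  exact congrArg (Finsupp.mapDomain · x) (funext (A.compat n g))

variable [∀ i, Fintype (X i)]

lemma predPush_apply (x : Vert X (n + 1) →₀ F) (z : Vert X n) :
    predPush F n x z = ∑ d : Desc X z, x d.1 := by
  classical
  induction x using Finsupp.induction_linear with
  | zero => simp
  | add x y hx hy => simp [hx, hy, sum_add_distrib]
  | single w c =>
    simp only [predPush, Finsupp.lmapDomain_apply, Finsupp.mapDomain_single, Finsupp.single_apply]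
    by_cases hw : pred w = z
    · rw [if_pos hw]
      refine ((Fintype.sum_eq_single (f := fun d : Desc X z => if w = d.1 then c else 0) ⟨w, hw⟩
        fun d hd => if_neg fun h => hd (Subtype.ext h.symm)).trans (if_pos rfl)).symm
    · rw [if_neg hw]
      exact (Fintype.sum_eq_zero _ fun d => if_neg fun h => hw (by rw [h]; exact d.2)).symm

variable (F n) in
noncomputable def predPull : (Vert X n →₀ F) →ₗ[F] (Vert X (n + 1) →₀ F) where
  toFun y := Finsupp.equivFunOnFinite.symm fun w => (Fintype.card (X n) : F)⁻¹ * y (pred w)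
  map_add' _ _ := by ext; simp [mul_add]
  map_smul' _ _ := by ext; simp [mul_left_comm]

lemma predPull_apply (y : Vert X n →₀ F) (w : Vert X (n + 1)) :
    predPull F n y w = (Fintype.card (X n) : F)⁻¹ * y (pred w) :=
  rfl

lemma predPull_levelRep (g : G) (y : Vert X n →₀ F) :
    predPull F n (levelRep F A n g y) = levelRep F A (n + 1) g (predPull F n y) := by
  ext w
  simp only [predPull_apply, levelRep_apply, A.compat]

lemma predPush_predPull (hN : (Fintype.card (X n) : F) ≠ 0) (y : Vert X n →₀ F) :
    predPush F n (predPull F n y) = y := by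
  ext z
  have hd : ∀ d : Desc X z, pred d.1 = z := fun d => d.2
  simp only [predPush_apply, predPull_apply, hd, sum_const, card_univ, card_desc, nsmul_eq_mul,
    mul_inv_cancel_left₀ hN]

end Levels

section Restriction

variable [∀ i, Fintype (X i)] {F : Type} [Field F] (A : TreeAction X G) {n : ℕ} (v : Vert X n)

variable (F) in
noncomputable def restrictDesc (g : G) : (Vert X (n + 1) →₀ F) →ₗ[F] (Desc X v →₀ F) where
  toFun x := Finsupp.equivFunOnFinite.symm fun d => levelRep F A (n + 1) g x d.1
  map_add' _ _ := by ext; simp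
  map_smul' _ _ := by ext; simp

lemma restrictDesc_apply (g : G) (x : Vert X (n + 1) →₀ F) (d : Desc X v) :
    restrictDesc F A v g x d = x (A.ρ (n + 1) g⁻¹ d.1) :=
  levelRep_apply F A (n + 1) g x d.1

lemma restrictDesc_levelRep (g h : G) (x : Vert X (n + 1) →₀ F) :
    restrictDesc F A v g (levelRep F A (n + 1) h x) = restrictDesc F A v (g * h) x := by
  ext d
  simp only [restrictDesc_apply, levelRep_apply, mul_inv_rev, map_mul, Equiv.Perm.mul_apply]

lemma restrictDesc_stab_mul (s : stab A v) (g : G) (x : Vert X (n + 1) →₀ F) :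
    restrictDesc F A v (s * g) x = descRep F A v s (restrictDesc F A v g x) := by
  ext d
  rw [descRep_apply, restrictDesc_apply, restrictDesc_apply, mul_inv_rev, map_mul,
    Equiv.Perm.mul_apply]
  rfl

lemma sum_restrictDesc (g : G) (x : Vert X (n + 1) →₀ F) :
    ∑ d, restrictDesc F A v g x d = predPush F n x (A.ρ n g⁻¹ v) := by
  rw [← levelRep_apply, ← predPush_levelRep, predPush_apply]
  rfl

lemma eq_zero_of_restrictDesc_eq_zero (hsph : SphTrans A) {x : Vert X (n + 1) →₀ F}
    (hx : ∀ g, restrictDesc F A v g x = 0) : x = 0 := by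
  ext w
  obtain ⟨g, hg⟩ := hsph n (pred w) v
  have hd : pred (A.ρ (n + 1) g w) = v := by rw [A.compat, hg]
  have hw : A.ρ (n + 1) g⁻¹ (A.ρ (n + 1) g w) = w := by simp
  rw [Finsupp.coe_zero, Pi.zero_apply, ← hw, ← restrictDesc_apply A v g x ⟨_, hd⟩, hx g]
  rfl

lemma exists_restrictDesc_eq (hsph : SphTrans A) (φ : G → Desc X v →₀ F)
    (hφ : ∀ (s : stab A v) (g : G), φ (s * g) = descRep F A v s (φ g)) :
    ∃ x, ∀ g, restrictDesc F A v g x = φ g := by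
  -- `τ z` carries `z` to `v`; on the fibre over `z`, `x` is `φ (τ z)` carried back.
  choose τ hτ using fun z => hsph n z v
  have hpred : ∀ w, pred (A.ρ (n + 1) (τ (pred w)) w) = v := fun w => by rw [A.compat, hτ]
  refine ⟨Finsupp.equivFunOnFinite.symm fun w => φ (τ (pred w)) ⟨_, hpred w⟩, fun g => ?_⟩
  ext d
  set w := A.ρ (n + 1) g⁻¹ d.1
  set t := τ (pred w)
  have hs : t * g⁻¹ ∈ stab A v := by
    have hw : pred w = A.ρ n g⁻¹ v := by rw [A.compat, d.2]
    show A.ρ n (t * g⁻¹) v = v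
    rw [map_mul, Equiv.Perm.mul_apply, ← hw, hτ]
  have key := hφ ⟨t * g⁻¹, hs⟩ g
  rw [inv_mul_cancel_right] at key
  rw [restrictDesc_apply, Finsupp.coe_equivFunOnFinite_symm, key]
  refine (descRep_apply F A v _ _ _).trans (congrArg (φ g) (Subtype.ext ?_))
  show A.ρ (n + 1) (t * g⁻¹)⁻¹ (A.ρ (n + 1) t w) = d.1
  simp [w, map_mul]

end Restriction

section Decomposition

variable [∀ i, Fintype (X i)] {F : Type} [Field F] (A : TreeAction X G) {n : ℕ} (v : Vert X n)
  {W : Type} [AddCommGroup W] [Module F W] (θ : Representation F (stab A v) W)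
  {j : W →ₗ[F] (Desc X v →₀ F)}

lemma restrictDesc_sub_predPull_mem_zeroSum (hN : (Fintype.card (X n) : F) ≠ 0) (g : G)
    (x : Vert X (n + 1) →₀ F) :
    restrictDesc F A v g (x - predPull F n (predPush F n x)) ∈ zeroSum F (Desc X v) := by
  rw [mem_zeroSum_iff, sum_restrictDesc, map_sub, predPush_predPull hN, sub_self,
    Finsupp.coe_zero, Pi.zero_apply]

noncomputable def toInd (hjinj : Function.Injective j)
    (hjrange : LinearMap.range j = zeroSum F (Desc X v))
    (hjequiv : ∀ (g : stab A v) (x : W), j (θ g x) = descRep F A v g (j x))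
    (hN : (Fintype.card (X n) : F) ≠ 0) :
    (Vert X (n + 1) →₀ F) →ₗ[F] IndCarrier (stab A v) θ :=
  (LinearMap.pi fun g => LinearMap.codRestrictOfInjective
      (restrictDesc F A v g ∘ₗ (LinearMap.id - predPull F n ∘ₗ predPush F n)) j hjinj
      fun x => by rw [hjrange]; exact restrictDesc_sub_predPull_mem_zeroSum A v hN g x).codRestrict
    _ fun x s g => hjinj <| by
      simp only [LinearMap.pi_apply, hjequiv, LinearMap.codRestrictOfInjective_comp_apply,
        LinearMap.comp_apply, restrictDesc_stab_mul]

variable (hjinj : Function.Injective j) (hjrange : LinearMap.range j = zeroSum F (Desc X v))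
  (hjequiv : ∀ (g : stab A v) (x : W), j (θ g x) = descRep F A v g (j x))
  (hN : (Fintype.card (X n) : F) ≠ 0)

lemma apply_toInd (x : Vert X (n + 1) →₀ F) (g : G) :
    j ((toInd A v θ hjinj hjrange hjequiv hN x).1 g)
      = restrictDesc F A v g (x - predPull F n (predPush F n x)) :=
  LinearMap.codRestrictOfInjective_comp_apply _ _ hjinj _ x

lemma toInd_levelRep (g : G) (x : Vert X (n + 1) →₀ F) :
    toInd A v θ hjinj hjrange hjequiv hN (levelRep F A (n + 1) g x)
      = IndRep (stab A v) θ g (toInd A v θ hjinj hjrange hjequiv hN x) := by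
  refine Subtype.ext (funext fun h => hjinj ?_)
  show j ((toInd A v θ hjinj hjrange hjequiv hN _).1 h)
    = j ((toInd A v θ hjinj hjrange hjequiv hN x).1 (h * g))
  rw [apply_toInd, apply_toInd, predPush_levelRep, predPull_levelRep, ← map_sub,
    restrictDesc_levelRep]

lemma bijective_predPush_prod_toInd (hsph : SphTrans A) :
    Function.Bijective ((predPush F n).prod (toInd A v θ hjinj hjrange hjequiv hN)) := by
  constructor
  · refine (injective_iff_map_eq_zero _).mpr fun x hx => ?_
    obtain ⟨hpush, hind⟩ : predPush F n x = 0 ∧ toInd A v θ hjinj hjrange hjequiv hN x = 0 :=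
      Prod.ext_iff.mp hx
    refine eq_zero_of_restrictDesc_eq_zero A v hsph fun g => ?_
    have hg := apply_toInd A v θ hjinj hjrange hjequiv hN x g
    rw [hind, hpush, map_zero, sub_zero] at hg
    simpa using hg.symm
  · rintro ⟨y, f⟩
    obtain ⟨x, hx⟩ := exists_restrictDesc_eq A v hsph (fun g => j (f.1 g)) fun s g => by
      rw [f.2, hjequiv]
    have hpush : predPush F n x = 0 := by
      ext z
      obtain ⟨g, hg⟩ := hsph n z v
      rw [show z = A.ρ n g⁻¹ v by simp [← hg], ← sum_restrictDesc, hx, Finsupp.coe_zero,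
        Pi.zero_apply, ← mem_zeroSum_iff, ← hjrange]
      exact LinearMap.mem_range_self j _
    refine ⟨predPull F n y + x, Prod.ext ?_ (Subtype.ext (funext fun g => hjinj ?_))⟩
    · simp [predPush_predPull hN, hpush]
    · show j ((toInd A v θ hjinj hjrange hjequiv hN _).1 g) = j (f.1 g)
      rw [apply_toInd, map_add, hpush, add_zero, predPush_predPull hN, add_sub_cancel_left, hx]

end Decomposition

theorem stmt_12_general {X : ℕ → Type} [∀ i, Fintype (X i)] {G : Type} [Group G]
    (A : TreeAction X G) (F : Type) [Field F]
    (hchar : ∀ k : ℕ, ¬ (ringChar F ∣ Nat.card (A.ρ k).range))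
    (hsph : SphTrans A) {n : ℕ} (v : Vert X n)
    (u : Vert X (n + 1))
    (W : Type) [AddCommGroup W] [Module F W]
    (θ : Representation F (stab A v) W)
    (j : W →ₗ[F] (Desc X v →₀ F)) (hjinj : Function.Injective j)
    (hjrange : LinearMap.range j = zeroSum F (Desc X v))
    (hjequiv : ∀ (g : stab A v) (x : W), j (θ g x) = descRep F A v g (j x)) :
    ∃ e : (Vert X (n + 1) →₀ F) ≃ₗ[F] ((Vert X n →₀ F) × IndCarrier (stab A v) θ),
      ∀ (g : G) (x : Vert X (n + 1) →₀ F),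
        e (levelRep F A (n + 1) g x) =
          (levelRep F A n g (e x).1, IndRep (stab A v) θ g (e x).2) := by
  have hN : (Fintype.card (X n) : F) ≠ 0 := fun h => hchar (n + 1) <|
    ((ringChar.spec F _).mp h).trans <|
      (card_dvd_card_vert_succ n).trans (card_vert_dvd_card_range A hsph u)
  refine ⟨LinearEquiv.ofBijective _
    (bijective_predPush_prod_toInd A v θ hjinj hjrange hjequiv hN hsph), fun g x => ?_⟩
  exact Prod.ext (predPush_levelRep A g x) (toInd_levelRep A v θ hjinj hjrange hjequiv hN g x)

/-- For a spherically transitive action of `G` and `char F` not dividing the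
Steinitz order of the closure of `G`, the permutation representation of `G` on
`F[L_{n+1}]` is isomorphic to the direct sum of the permutation representation on
`F[L_n]` and the representation induced from the representation `θ` of the
stabiliser of `v` on the complement `F[D(v)]⁰` of the trivial representation
in `F[D(v)]` (realised as any representation `θ` isomorphic, via an equivariant
embedding `j`, to the zero-coefficient-sum subrepresentation of `F[D(v)]`). -/
theorem stmt_12 {X : ℕ → Type} [∀ i, Fintype (X i)] {G : Type} [Group G]
    (A : TreeAction X G) (F : Type) [Field F]
    (hchar : ∀ k : ℕ, ¬ (ringChar F ∣ Nat.card (A.ρ k).range))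
    (hsph : SphTrans A) {n : ℕ} (v : Vert X n)
    (u : Vert X (n + 1)) (hu : pred u = v)
    (W : Type) [AddCommGroup W] [Module F W]
    (θ : Representation F (stab A v) W)
    (j : W →ₗ[F] (Desc X v →₀ F)) (hjinj : Function.Injective j)
    (hjrange : LinearMap.range j = zeroSum F (Desc X v))
    (hjequiv : ∀ (g : stab A v) (x : W), j (θ g x) = descRep F A v g (j x)) :
    ∃ e : (Vert X (n + 1) →₀ F) ≃ₗ[F] ((Vert X n →₀ F) × IndCarrier (stab A v) θ),
      ∀ (g : G) (x : Vert X (n + 1) →₀ F),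
        e (levelRep F A (n + 1) g x) =
          (levelRep F A n g (e x).1, IndRep (stab A v) θ g (e x).2) :=
  stmt_12_general A F hchar hsph v u W θ j hjinj hjrange hjequiv
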